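/- (Theorem 1(i), coordinate version.) Let U ⊆ ℝⁿ be open with a metric g and an affine connection D given by Christoffel symbols Γ, and let Ω be the Kähler form of the natural almost Hermitian structure (J^D, g̃^D) on TU = U × ℝⁿ. Then (J^D, g̃^D) is almost Kähler, i.e. dΩ = 0 identically on TU, if and only if the dual connection D* of D with respect to g is torsion-free, i.e. T^{D*}(x) = 0 for all x ∈ U. -/

import Mathlib

set_option maxHeartbeats 2000000



/-!
STATEMENT 4 (Theorem 1(i)): (J^D, g̃^D) is almost Kähler (dΩ = 0 on TU) iff the
dual connection D* is torsion-free.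
-/

/-- Torsion of the connection with Christoffel symbols `Γ`. -/
noncomputable def torsion {n : ℕ}
    (Γ : (Fin n → ℝ) → (Fin n → ℝ) →L[ℝ] (Fin n → ℝ) →L[ℝ] (Fin n → ℝ))
    (x v w : Fin n → ℝ) : Fin n → ℝ :=
  Γ x v w - Γ x w v

/-- The almost complex structure `J^D` (with `J^D(v^H) = v^V`, `J^D(v^V) = −v^H`,
where `v^H = (v, −Γ(x)(v)(ξ))`, `v^V = (0,v)`). -/
noncomputable def Jstr {n : ℕ}
    (Γ : (Fin n → ℝ) → (Fin n → ℝ) →L[ℝ] (Fin n → ℝ) →L[ℝ] (Fin n → ℝ))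
    (x ξ : Fin n → ℝ) (A : (Fin n → ℝ) × (Fin n → ℝ)) :
    (Fin n → ℝ) × (Fin n → ℝ) :=
  (-(A.2 + Γ x A.1 ξ), A.1 + Γ x (A.2 + Γ x A.1 ξ) ξ)

/-- The Sasaki metric `g̃^D` at `(x,ξ)`. -/
noncomputable def sasaki {n : ℕ}
    (g : (Fin n → ℝ) → (Fin n → ℝ) →L[ℝ] (Fin n → ℝ) →L[ℝ] ℝ)
    (Γ : (Fin n → ℝ) → (Fin n → ℝ) →L[ℝ] (Fin n → ℝ) →L[ℝ] (Fin n → ℝ))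
    (x ξ : Fin n → ℝ) (A B : (Fin n → ℝ) × (Fin n → ℝ)) : ℝ :=
  g x A.1 B.1 + g x (A.2 + Γ x A.1 ξ) (B.2 + Γ x B.1 ξ)

/-- The Kähler form `Ω(A,B) = g̃^D(J^D A, B)`. -/
noncomputable def kform {n : ℕ}
    (g : (Fin n → ℝ) → (Fin n → ℝ) →L[ℝ] (Fin n → ℝ) →L[ℝ] ℝ)
    (Γ : (Fin n → ℝ) → (Fin n → ℝ) →L[ℝ] (Fin n → ℝ) →L[ℝ] (Fin n → ℝ))
    (x ξ : Fin n → ℝ) (A B : (Fin n → ℝ) × (Fin n → ℝ)) : ℝ :=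
  sasaki g Γ x ξ (Jstr Γ x ξ A) B

/-- Exterior derivative of Ω. -/
noncomputable def dkform {n : ℕ}
    (g : (Fin n → ℝ) → (Fin n → ℝ) →L[ℝ] (Fin n → ℝ) →L[ℝ] ℝ)
    (Γ : (Fin n → ℝ) → (Fin n → ℝ) →L[ℝ] (Fin n → ℝ) →L[ℝ] (Fin n → ℝ))
    (a : (Fin n → ℝ) × (Fin n → ℝ)) (A B C : (Fin n → ℝ) × (Fin n → ℝ)) : ℝ :=
  fderiv ℝ (fun p => kform g Γ p.1 p.2 B C) a A
    - fderiv ℝ (fun p => kform g Γ p.1 p.2 A C) a B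
    + fderiv ℝ (fun p => kform g Γ p.1 p.2 A B) a C

/-- Explicit formula for the Kähler form. -/
lemma kform_eq {n : ℕ}
    (g : (Fin n → ℝ) → (Fin n → ℝ) →L[ℝ] (Fin n → ℝ) →L[ℝ] ℝ)
    (Γ : (Fin n → ℝ) → (Fin n → ℝ) →L[ℝ] (Fin n → ℝ) →L[ℝ] (Fin n → ℝ))
    (x ξ : Fin n → ℝ) (A B : (Fin n → ℝ) × (Fin n → ℝ)) :
    kform g Γ x ξ A B
      = g x A.1 B.2 - g x A.2 B.1 + g x A.1 (Γ x B.1 ξ) - g x (Γ x A.1 ξ) B.1 := by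
  simp only [kform, sasaki, Jstr, map_neg, map_add, ContinuousLinearMap.neg_apply,
    ContinuousLinearMap.add_apply]
  ring

theorem statement4 (n : ℕ) (hn : 1 ≤ n) (U : Set (Fin n → ℝ)) (hU : IsOpen U)
    (g : (Fin n → ℝ) → (Fin n → ℝ) →L[ℝ] (Fin n → ℝ) →L[ℝ] ℝ)
    (hg : ContDiffOn ℝ (⊤ : ℕ∞) g U)
    (hgsymm : ∀ x ∈ U, ∀ v w : Fin n → ℝ, g x v w = g x w v)
    (hgpos : ∀ x ∈ U, ∀ v : Fin n → ℝ, v ≠ 0 → 0 < g x v v)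
    (Γ : (Fin n → ℝ) → (Fin n → ℝ) →L[ℝ] (Fin n → ℝ) →L[ℝ] (Fin n → ℝ))
    (hΓ : ContDiffOn ℝ (⊤ : ℕ∞) Γ U)
    -- the dual connection D* with Christoffel symbols Γs
    (Γs : (Fin n → ℝ) → (Fin n → ℝ) →L[ℝ] (Fin n → ℝ) →L[ℝ] (Fin n → ℝ))
    (hΓs : ContDiffOn ℝ (⊤ : ℕ∞) Γs U)
    (hdual : ∀ x ∈ U, ∀ v y z : Fin n → ℝ,
      fderiv ℝ g x v y z = g x (Γs x v y) z + g x y (Γ x v z)) :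
    (∀ a : (Fin n → ℝ) × (Fin n → ℝ), a.1 ∈ U →
        ∀ A B C : (Fin n → ℝ) × (Fin n → ℝ), dkform g Γ a A B C = 0)
      ↔ (∀ x ∈ U, ∀ v w : Fin n → ℝ, torsion Γs x v w = 0) := by
  -- differentiability at points of U
  have hgd : ∀ x ∈ U, HasFDerivAt g (fderiv ℝ g x) x := fun x hx =>
    ((hg.contDiffAt (hU.mem_nhds hx)).differentiableAt (by simp)).hasFDerivAt
  have hΓd : ∀ x ∈ U, HasFDerivAt Γ (fderiv ℝ Γ x) x := fun x hx =>
    ((hΓ.contDiffAt (hU.mem_nhds hx)).differentiableAt (by simp)).hasFDerivAt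
  have hΓsd : ∀ x ∈ U, HasFDerivAt Γs (fderiv ℝ Γs x) x := fun x hx =>
    ((hΓs.contDiffAt (hU.mem_nhds hx)).differentiableAt (by simp)).hasFDerivAt
  -- the key derivative formula
  have key : ∀ x ∈ U, ∀ ξ : Fin n → ℝ, ∀ A B C : (Fin n → ℝ) × (Fin n → ℝ),
      fderiv ℝ (fun p => kform g Γ p.1 p.2 B C) (x, ξ) A
        = fderiv ℝ g x A.1 B.1 C.2 - fderiv ℝ g x A.1 B.2 C.1
          + (fderiv ℝ g x A.1 B.1 (Γ x C.1 ξ) + g x B.1 (fderiv ℝ Γ x A.1 C.1 ξ)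
              + g x B.1 (Γ x C.1 A.2))
          - (fderiv ℝ g x A.1 (Γ x B.1 ξ) C.1 + g x (fderiv ℝ Γ x A.1 B.1 ξ) C.1
              + g x (Γ x B.1 A.2) C.1) := by
    intro x hx ξ A B C
    have hg1 : HasFDerivAt (fun p : (Fin n → ℝ) × (Fin n → ℝ) => g p.1)
        ((fderiv ℝ g x).comp (ContinuousLinearMap.fst ℝ _ _)) (x, ξ) :=
      by have := HasFDerivAt.comp (x, ξ) (g := g) (hgd x hx) (hasFDerivAt_fst (p := (x, ξ)) (𝕜 := ℝ)); exact this
    have hΓ1 : HasFDerivAt (fun p : (Fin n → ℝ) × (Fin n → ℝ) => Γ p.1)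
        ((fderiv ℝ Γ x).comp (ContinuousLinearMap.fst ℝ _ _)) (x, ξ) :=
      by have := HasFDerivAt.comp (x, ξ) (g := Γ) (hΓd x hx) (hasFDerivAt_fst (p := (x, ξ)) (𝕜 := ℝ)); exact this
    have hΓB := (hΓ1.clm_apply (hasFDerivAt_const B.1 _)).clm_apply (hasFDerivAt_snd)
    have hΓC := (hΓ1.clm_apply (hasFDerivAt_const C.1 _)).clm_apply (hasFDerivAt_snd)
    have h1 := (hg1.clm_apply (hasFDerivAt_const B.1 _)).clm_apply (hasFDerivAt_const C.2 _)
    have h2 := (hg1.clm_apply (hasFDerivAt_const B.2 _)).clm_apply (hasFDerivAt_const C.1 _)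
    have h3 := (hg1.clm_apply (hasFDerivAt_const B.1 _)).clm_apply hΓC
    have h4 := (hg1.clm_apply hΓB).clm_apply (hasFDerivAt_const C.1 _)
    have H := ((h1.sub h2).add h3).sub h4
    simp only [kform_eq]
    erw [H.fderiv]
    simp [ContinuousLinearMap.add_apply, ContinuousLinearMap.sub_apply,
      ContinuousLinearMap.comp_apply, ContinuousLinearMap.flip_apply]
    ring
  -- auxiliary: derivatives of scalar evaluations
  have hgapp : ∀ x ∈ U, ∀ y z u : Fin n → ℝ,
      fderiv ℝ (fun x' => g x' y z) x u = fderiv ℝ g x u y z := by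
    intro x hx y z u
    have h := ((hgd x hx).clm_apply (hasFDerivAt_const y x)).clm_apply (hasFDerivAt_const z x)
    rw [h.fderiv]; simp
  have hΓsapp : ∀ x ∈ U, ∀ y z u : Fin n → ℝ,
      fderiv ℝ (fun x' => Γs x' y z) x u = fderiv ℝ Γs x u y z := by
    intro x hx y z u
    have h := ((hΓsd x hx).clm_apply (hasFDerivAt_const y x)).clm_apply (hasFDerivAt_const z x)
    rw [h.fderiv]; simp
  -- symmetry of the derivative of g in its last two slots
  have hPsym : ∀ x ∈ U, ∀ u y z : Fin n → ℝ,
      fderiv ℝ g x u y z = fderiv ℝ g x u z y := by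
    intro x hx u y z
    rw [← hgapp x hx y z u, ← hgapp x hx z y u]
    have h : (fun x' => g x' y z) =ᶠ[nhds x] (fun x' => g x' z y) :=
      Filter.eventuallyEq_of_mem (hU.mem_nhds hx) (fun x' hx' => hgsymm x' hx' y z)
    rw [h.fderiv_eq]
  constructor
  · -- dΩ = 0 → torsion-free
    intro h x hx v w
    by_contra ht
    have h0 := h (x, 0) hx (v, 0) (w, 0) (0, torsion Γs x v w)
    rw [dkform, key x hx 0 (v, 0) (w, 0) (0, torsion Γs x v w),
      key x hx 0 (w, 0) (v, 0) (0, torsion Γs x v w),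
      key x hx 0 (0, torsion Γs x v w) (v, 0) (w, 0)] at h0
    simp only [map_zero, ContinuousLinearMap.zero_apply] at h0
    have hG : g x (torsion Γs x v w) (torsion Γs x v w) = 0 := by
      have hsub : g x (torsion Γs x v w) (torsion Γs x v w)
          = g x (Γs x v w) (torsion Γs x v w) - g x (Γs x w v) (torsion Γs x v w) := by
        have hm : g x (torsion Γs x v w) = g x (Γs x v w) - g x (Γs x w v) := by
          rw [torsion, map_sub]
        rw [hm, ContinuousLinearMap.sub_apply]
      rw [hsub]
      linarith [h0, hdual x hx v w (torsion Γs x v w), hdual x hx w v (torsion Γs x v w),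
        hgsymm x hx (Γ x v (torsion Γs x v w)) w, hgsymm x hx (Γ x w (torsion Γs x v w)) v]
    have ht' : torsion Γs x v w ≠ 0 := by rwa [torsion]
    exact absurd hG (ne_of_gt (hgpos x hx _ ht'))
  · -- torsion-free → dΩ = 0
    intro hT a hx' A B C
    obtain ⟨x, ξ⟩ := a
    have hx : x ∈ U := hx'
    -- vector-level symmetry facts
    have hTv : ∀ v w : Fin n → ℝ, Γs x v w = Γs x w v := by
      intro v w; have := hT x hx v w; rwa [torsion, sub_eq_zero] at this
    have hQs : ∀ u v w : Fin n → ℝ, fderiv ℝ Γs x u v w = fderiv ℝ Γs x u w v := by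
      intro u v w
      rw [← hΓsapp x hx v w u, ← hΓsapp x hx w v u]
      have h : (fun x' => Γs x' v w) =ᶠ[nhds x] (fun x' => Γs x' w v) := by
        filter_upwards [hU.mem_nhds hx] with x' hx'
        have := hT x' hx' v w; rwa [torsion, sub_eq_zero] at this
      rw [h.fderiv_eq]
    -- second-derivative symmetry (the key integrability identity)
    have hEv : ∀ᶠ y in nhds x, HasFDerivAt g (fderiv ℝ g y) y := by
      filter_upwards [hU.mem_nhds hx] with y hy using hgd y hy
    have hsw : ∀ u v y z : Fin n → ℝ,
        fderiv ℝ (fun x' => fderiv ℝ g x' v y z) x u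
          = fderiv ℝ (fun x' => fderiv ℝ g x' u y z) x v := by
      intro u v y z
      set f : (Fin n → ℝ) → ℝ := fun x' => g x' y z with hf
      have hfc : ContDiffAt ℝ (⊤ : ℕ∞) f x :=
        ((hg.contDiffAt (hU.mem_nhds hx)).clm_apply contDiffAt_const).clm_apply contDiffAt_const
      have hf'' : HasFDerivAt (fderiv ℝ f) (fderiv ℝ (fderiv ℝ f) x) x :=
        ((hfc.fderiv_right (m := 1) (by exact WithTop.coe_le_coe.mpr le_top)).differentiableAt one_ne_zero).hasFDerivAt
      have hEvf : ∀ᶠ y' in nhds x, HasFDerivAt f (fderiv ℝ f y') y' := by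
        filter_upwards [hU.mem_nhds hx] with y' hy'
        exact (((hgd y' hy').clm_apply (hasFDerivAt_const y y')).clm_apply
          (hasFDerivAt_const z y')).differentiableAt.hasFDerivAt
      have hs := second_derivative_symmetric_of_eventually hEvf hf'' u v
      have hloc : ∀ w : Fin n → ℝ, fderiv ℝ (fun x' => fderiv ℝ g x' w y z) x
          = fderiv ℝ (fun x' => fderiv ℝ f x' w) x := by
        intro w
        apply Filter.EventuallyEq.fderiv_eq
        filter_upwards [hU.mem_nhds hx] with y' hy' using (hgapp y' hy' y z w).symm
      have hd : ∀ w w' : Fin n → ℝ, fderiv ℝ (fun x' => fderiv ℝ f x' w) x w'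
          = fderiv ℝ (fderiv ℝ f) x w' w := by
        intro w w'
        rw [(hf''.clm_apply (hasFDerivAt_const w x)).fderiv]; simp
      rw [hloc, hloc, hd, hd, hs]
    have hexp : ∀ u v y z : Fin n → ℝ,
        fderiv ℝ (fun x' => fderiv ℝ g x' v y z) x u
          = fderiv ℝ g x u (Γs x v y) z + g x (fderiv ℝ Γs x u v y) z
            + fderiv ℝ g x u y (Γ x v z) + g x y (fderiv ℝ Γ x u v z) := by
      intro u v y z
      have h2 : fderiv ℝ (fun x' => fderiv ℝ g x' v y z) x
          = fderiv ℝ (fun x' => g x' (Γs x' v y) z + g x' y (Γ x' v z)) x := by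
        apply Filter.EventuallyEq.fderiv_eq
        filter_upwards [hU.mem_nhds hx] with y' hy' using hdual y' hy' v y z
      have hΓs_vy := ((hΓsd x hx).clm_apply (hasFDerivAt_const v x)).clm_apply
        (hasFDerivAt_const y x)
      have hΓ_vz := ((hΓd x hx).clm_apply (hasFDerivAt_const v x)).clm_apply
        (hasFDerivAt_const z x)
      have hR := (((hgd x hx).clm_apply hΓs_vy).clm_apply (hasFDerivAt_const z x)).add
        (((hgd x hx).clm_apply (hasFDerivAt_const y x)).clm_apply hΓ_vz)
      rw [h2]; erw [hR.fderiv]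
      simp [ContinuousLinearMap.add_apply, ContinuousLinearMap.comp_apply,
        ContinuousLinearMap.flip_apply]
      ring
    have H6 : ∀ u v y z : Fin n → ℝ,
        fderiv ℝ g x u (Γs x v y) z + g x (fderiv ℝ Γs x u v y) z
          + fderiv ℝ g x u y (Γ x v z) + g x y (fderiv ℝ Γ x u v z)
        = fderiv ℝ g x v (Γs x u y) z + g x (fderiv ℝ Γs x v u y) z
          + fderiv ℝ g x v y (Γ x u z) + g x y (fderiv ℝ Γ x v u z) := by
      intro u v y z
      rw [← hexp u v y z, ← hexp v u y z, hsw u v]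
    -- now the algebra
    rw [dkform, key x hx ξ A B C, key x hx ξ B A C, key x hx ξ C A B]
    have hsym : ∀ y z : Fin n → ℝ, g x y z = g x z y := hgsymm x hx
    have hP : ∀ u y z : Fin n → ℝ,
        fderiv ℝ g x u y z = g x (Γs x u y) z + g x y (Γ x u z) := hdual x hx
    have hPs : ∀ u y z : Fin n → ℝ, fderiv ℝ g x u y z = fderiv ℝ g x u z y := hPsym x hx
    -- instances
    have i1 := hP A.1 B.1 C.2
    have i2 := hP B.1 A.1 C.2
    have e1 : g x (Γs x A.1 B.1) C.2 = g x (Γs x B.1 A.1) C.2 := by rw [hTv A.1 B.1]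
    have s1 : g x B.1 (Γ x A.1 C.2) = g x (Γ x A.1 C.2) B.1 := hsym _ _
    have i3 := hPs A.1 B.2 C.1
    have i4 := hP A.1 C.1 B.2
    have i5 := hP C.1 A.1 B.2
    have e2 : g x (Γs x A.1 C.1) B.2 = g x (Γs x C.1 A.1) B.2 := by rw [hTv A.1 C.1]
    have s2 : g x (Γ x A.1 B.2) C.1 = g x C.1 (Γ x A.1 B.2) := hsym _ _
    have i6 := hPs B.1 A.2 C.1
    have i7 := hPs C.1 A.2 B.1
    have i8 := hP B.1 C.1 A.2
    have i9 := hP C.1 B.1 A.2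
    have e3 : g x (Γs x B.1 C.1) A.2 = g x (Γs x C.1 B.1) A.2 := by rw [hTv B.1 C.1]
    have s3 : g x (Γ x B.1 A.2) C.1 = g x C.1 (Γ x B.1 A.2) := hsym _ _
    have s4 : g x (fderiv ℝ Γ x A.1 B.1 ξ) C.1 = g x C.1 (fderiv ℝ Γ x A.1 B.1 ξ) := hsym _ _
    have s5 : g x (fderiv ℝ Γ x B.1 A.1 ξ) C.1 = g x C.1 (fderiv ℝ Γ x B.1 A.1 ξ) := hsym _ _
    have s6 : g x (fderiv ℝ Γ x C.1 A.1 ξ) B.1 = g x B.1 (fderiv ℝ Γ x C.1 A.1 ξ) := hsym _ _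
    have j1 := H6 A.1 C.1 B.1 ξ
    have j2 := H6 B.1 A.1 C.1 ξ
    have j3 := H6 C.1 B.1 A.1 ξ
    have q1 : g x (fderiv ℝ Γs x C.1 A.1 B.1) ξ = g x (fderiv ℝ Γs x C.1 B.1 A.1) ξ := by
      rw [hQs C.1 A.1 B.1]
    have q2 : g x (fderiv ℝ Γs x A.1 C.1 B.1) ξ = g x (fderiv ℝ Γs x A.1 B.1 C.1) ξ := by
      rw [hQs A.1 C.1 B.1]
    have q3 : g x (fderiv ℝ Γs x B.1 A.1 C.1) ξ = g x (fderiv ℝ Γs x B.1 C.1 A.1) ξ := by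
      rw [hQs B.1 A.1 C.1]
    have e4 : fderiv ℝ g x C.1 (Γs x A.1 B.1) ξ = fderiv ℝ g x C.1 (Γs x B.1 A.1) ξ := by
      rw [hTv A.1 B.1]
    have e5 : fderiv ℝ g x A.1 (Γs x B.1 C.1) ξ = fderiv ℝ g x A.1 (Γs x C.1 B.1) ξ := by
      rw [hTv B.1 C.1]
    have e6 : fderiv ℝ g x B.1 (Γs x A.1 C.1) ξ = fderiv ℝ g x B.1 (Γs x C.1 A.1) ξ := by
      rw [hTv A.1 C.1]
    have p1 := hPs A.1 (Γ x B.1 ξ) C.1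
    have p2 := hPs B.1 (Γ x A.1 ξ) C.1
    have p3 := hPs C.1 (Γ x A.1 ξ) B.1
    linarith
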